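/- arXiv:2502.01412 — 5 statements merged into one kernel-verified Lean document; each statement's English description precedes it below -/
import Mathlib

section
/- Let $R_1,\dots,R_6$ be positive real numbers and $D_1,\dots,D_6$ real numbers with $R_1=R_2+R_3$, $R_4=R_5+R_6$, $D_1=D_2+D_3$, $D_4=D_5+D_6$. Set $\mu_i=D_i/R_i$. Assume $\mu_5\ge\mu_6$, $\mu_6\ge\mu_3$, $\mu_5\ge\mu_2$ and $R_4/R_1\ge R_6/R_3$. Then $\mu_4\ge\mu_1$. -/
/-- Variant of Drézet's numerical slope-comparison lemma (non-strict version). -/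
theorem slope_comparison
    (R1 R2 R3 R4 R5 R6 D1 D2 D3 D4 D5 D6 : ℝ)
    (hR1 : 0 < R1) (hR2 : 0 < R2) (hR3 : 0 < R3)
    (hR4 : 0 < R4) (hR5 : 0 < R5) (hR6 : 0 < R6)
    (hRa : R1 = R2 + R3) (hRb : R4 = R5 + R6)
    (hDa : D1 = D2 + D3) (hDb : D4 = D5 + D6)
    (h56 : D5 / R5 ≥ D6 / R6)
    (h63 : D6 / R6 ≥ D3 / R3)
    (h52 : D5 / R5 ≥ D2 / R2)
    (hRR : R4 / R1 ≥ R6 / R3) :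
    D4 / R4 ≥ D1 / R1 := by
  subst hRa hRb hDa hDb
  rw [ge_iff_le, div_le_div_iff₀ hR1 hR4]
  rw [ge_iff_le, div_le_div_iff₀ hR6 hR5] at h56
  rw [ge_iff_le, div_le_div_iff₀ hR3 hR6] at h63
  rw [ge_iff_le, div_le_div_iff₀ hR2 hR5] at h52
  rw [ge_iff_le, div_le_div_iff₀ hR3 hR1] at hRR
  have key : ((D2 + D3) * (R5 + R6)) * (R5 * R6) ≤ ((D5 + D6) * (R2 + R3)) * (R5 * R6) := by
    nlinarith [mul_nonneg (mul_nonneg hR4.le hR6.le) (sub_nonneg.2 h52),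
      mul_nonneg (mul_nonneg hR4.le hR5.le) (sub_nonneg.2 h63),
      mul_nonneg (sub_nonneg.2 h56) (by nlinarith : (0:ℝ) ≤ (R2 + R3) * R5 - R2 * (R5 + R6))]
  exact le_of_mul_le_mul_right key (mul_pos hR5 hR6)
end

section
/- Let $m_1>m_2>m_3\ge 0$ and $m'_1>m'_2>m'_3\ge 0$ be integers, and let $q_1,q_2,q_3,q'_1,q'_2,q'_3$ be real numbers with $q_1\le q'_1$, $q_2\le q'_2$, $q_3\le q'_3$, $q'_1\le q'_2$, $q'_3\le q'_2$, $m_1 m'_3-m'_1 m_3\le 0$, and $m_2 m'_1-m'_2 m_1\le 0$. Then $\frac{m_3 q_1+(m_2-m_3)q_2+(m_1-m_2)q_3}{m_1} \le \frac{m'_3 q'_1+(m'_2-m'_3)q'_2+(m'_1-m'_2)q'_3}{m'_1}$. -/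
/-- Weighted-average slope estimate (non-strict version). -/
theorem weighted_average_le
    (m1 m2 m3 m1' m2' m3' : ℤ)
    (q1 q2 q3 q1' q2' q3' : ℝ)
    (hm1 : m1 > m2) (hm2 : m2 > m3) (hm3 : m3 ≥ 0)
    (hm1' : m1' > m2') (hm2' : m2' > m3') (hm3' : m3' ≥ 0)
    (hq1 : q1 ≤ q1') (hq2 : q2 ≤ q2') (hq3 : q3 ≤ q3')
    (hq12 : q1' ≤ q2') (hq32 : q3' ≤ q2')
    (hmm1 : m1 * m3' - m1' * m3 ≤ 0)
    (hmm2 : m2 * m1' - m2' * m1 ≤ 0) :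
    ((m3 : ℝ) * q1 + ((m2 : ℝ) - m3) * q2 + ((m1 : ℝ) - m2) * q3) / m1 ≤
      ((m3' : ℝ) * q1' + ((m2' : ℝ) - m3') * q2' + ((m1' : ℝ) - m2') * q3') / m1' := by
  have h1 : (0:ℝ) < (m1 : ℝ) := by exact_mod_cast (by omega : (0:ℤ) < m1)
  have h1' : (0:ℝ) < (m1' : ℝ) := by exact_mod_cast (by omega : (0:ℤ) < m1')
  have h3 : (0:ℝ) ≤ (m3 : ℝ) := by exact_mod_cast hm3
  have h23 : (0:ℝ) ≤ (m2 : ℝ) - m3 := by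
    have : (0:ℤ) ≤ m2 - m3 := by omega
    exact_mod_cast this
  have h12 : (0:ℝ) ≤ (m1 : ℝ) - m2 := by
    have : (0:ℤ) ≤ m1 - m2 := by omega
    exact_mod_cast this
  have hA : ((m1 : ℝ) * m3' - m1' * m3) ≤ 0 := by exact_mod_cast hmm1
  have hB : ((m2 : ℝ) * m1' - m2' * m1) ≤ 0 := by exact_mod_cast hmm2
  rw [div_le_div_iff₀ h1 h1']
  nlinarith [mul_nonneg h1'.le (mul_nonneg h3 (sub_nonneg.mpr hq1)),
    mul_nonneg h1'.le (mul_nonneg h23 (sub_nonneg.mpr hq2)),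
    mul_nonneg h1'.le (mul_nonneg h12 (sub_nonneg.mpr hq3)),
    mul_nonneg (neg_nonneg.mpr hA) (sub_nonneg.mpr hq12),
    mul_nonneg (neg_nonneg.mpr hB) (sub_nonneg.mpr hq32)]
end

section
/- Under the hypotheses of the weighted-average inequality (integers $m_1>m_2>m_3\ge0$, $m'_1>m'_2>m'_3\ge0$, reals with $q_i\le q'_i$, $q'_1\le q'_2$, $q'_3\le q'_2$, $m_1m'_3-m'_1m_3\le0$, $m_2m'_1-m'_2m_1\le0$), if moreover either ($q'_1<q'_2$ and $m_1m'_3-m'_1m_3<0$) or ($q'_3<q'_2$ and $m_2m'_1-m'_2m_1<0$), then the inequality $\frac{m_3 q_1+(m_2-m_3)q_2+(m_1-m_2)q_3}{m_1} < \frac{m'_3 q'_1+(m'_2-m'_3)q'_2+(m'_1-m'_2)q'_3}{m'_1}$ is strict. -/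
/-- Weighted-average slope estimate (strict version). -/
theorem weighted_average_lt
    (m1 m2 m3 m1' m2' m3' : ℤ)
    (q1 q2 q3 q1' q2' q3' : ℝ)
    (hm1 : m1 > m2) (hm2 : m2 > m3) (hm3 : m3 ≥ 0)
    (hm1' : m1' > m2') (hm2' : m2' > m3') (hm3' : m3' ≥ 0)
    (hq1 : q1 ≤ q1') (hq2 : q2 ≤ q2') (hq3 : q3 ≤ q3')
    (hq12 : q1' ≤ q2') (hq32 : q3' ≤ q2')
    (hmm1 : m1 * m3' - m1' * m3 ≤ 0)
    (hmm2 : m2 * m1' - m2' * m1 ≤ 0)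
    (hstrict : (q1' < q2' ∧ m1 * m3' - m1' * m3 < 0) ∨ (q3' < q2' ∧ m2 * m1' - m2' * m1 < 0)) :
    ((m3 : ℝ) * q1 + ((m2 : ℝ) - m3) * q2 + ((m1 : ℝ) - m2) * q3) / m1 <
      ((m3' : ℝ) * q1' + ((m2' : ℝ) - m3') * q2' + ((m1' : ℝ) - m2') * q3') / m1' := by
  have hm1R : (0 : ℝ) < (m1 : ℝ) := by exact_mod_cast (by omega : (0:ℤ) < m1)
  have hm1R' : (0 : ℝ) < (m1' : ℝ) := by exact_mod_cast (by omega : (0:ℤ) < m1')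
  have hm3R : (0 : ℝ) ≤ (m3 : ℝ) := by exact_mod_cast hm3
  have hm23 : (0 : ℝ) ≤ (m2 : ℝ) - m3 := by
    have : (m3:ℝ) ≤ m2 := by exact_mod_cast hm2.le
    linarith
  have hm12 : (0 : ℝ) ≤ (m1 : ℝ) - m2 := by
    have : (m2:ℝ) ≤ m1 := by exact_mod_cast hm1.le
    linarith
  have hA : ((m1:ℝ) * m3' - m1' * m3) ≤ 0 := by exact_mod_cast hmm1
  have hB : ((m2:ℝ) * m1' - m2' * m1) ≤ 0 := by exact_mod_cast hmm2
  have step1 : ((m3 : ℝ) * q1 + ((m2 : ℝ) - m3) * q2 + ((m1 : ℝ) - m2) * q3) / m1 ≤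
      ((m3 : ℝ) * q1' + ((m2 : ℝ) - m3) * q2' + ((m1 : ℝ) - m2) * q3') / m1 := by
    gcongr
  have key : ((m3' : ℝ) * q1' + ((m2' : ℝ) - m3') * q2' + ((m1' : ℝ) - m2') * q3') / m1' -
      ((m3 : ℝ) * q1' + ((m2 : ℝ) - m3) * q2' + ((m1 : ℝ) - m2) * q3') / m1 =
      (((m1:ℝ) * m3' - m1' * m3) * (q1' - q2') + ((m2:ℝ) * m1' - m2' * m1) * (q3' - q2')) /
        ((m1:ℝ) * m1') := by
    field_simp
    ring
  have hnum : 0 < ((m1:ℝ) * m3' - m1' * m3) * (q1' - q2') + ((m2:ℝ) * m1' - m2' * m1) * (q3' - q2') := by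
    rcases hstrict with ⟨h1, h2⟩ | ⟨h1, h2⟩
    · have h2R : ((m1:ℝ) * m3' - m1' * m3) < 0 := by exact_mod_cast h2
      have t1 : 0 < ((m1:ℝ) * m3' - m1' * m3) * (q1' - q2') :=
        mul_pos_of_neg_of_neg h2R (by linarith)
      have t2 : 0 ≤ ((m2:ℝ) * m1' - m2' * m1) * (q3' - q2') := by nlinarith
      linarith
    · have h2R : ((m2:ℝ) * m1' - m2' * m1) < 0 := by exact_mod_cast h2
      have t1 : 0 ≤ ((m1:ℝ) * m3' - m1' * m3) * (q1' - q2') := by nlinarith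
      have t2 : 0 < ((m2:ℝ) * m1' - m2' * m1) * (q3' - q2') :=
        mul_pos_of_neg_of_neg h2R (by linarith)
      linarith
  have step2 : ((m3 : ℝ) * q1' + ((m2 : ℝ) - m3) * q2' + ((m1 : ℝ) - m2) * q3') / m1 <
      ((m3' : ℝ) * q1' + ((m2' : ℝ) - m3') * q2' + ((m1' : ℝ) - m2') * q3') / m1' := by
    have : 0 < (((m1:ℝ) * m3' - m1' * m3) * (q1' - q2') + ((m2:ℝ) * m1' - m2' * m1) * (q3' - q2')) /
        ((m1:ℝ) * m1') := div_pos hnum (mul_pos hm1R hm1R')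
    linarith [key]
  exact lt_of_le_of_lt step1 step2
end

section
/- Let $\widehat{\mathcal{O}}_{X,p}=k[[s,\epsilon]]/(\epsilon^2)$ with nilradical $\widehat{\mathcal{N}}_p=(\epsilon)$, and for $n\ge0$ let $\widehat{\mathcal{I}}_{np}=(\epsilon,s^n)$. Then for any $n,m\ge0$ the cokernel of the restriction map $\mathrm{Hom}(\widehat{\mathcal{I}}_{np},\widehat{\mathcal{I}}_{mp}) \to \mathrm{Hom}(\widehat{\mathcal{N}}_p\widehat{\mathcal{I}}_{np},\widehat{\mathcal{N}}_p\widehat{\mathcal{I}}_{mp})$ is isomorphic as a module to $k[[s]]/(s^{\max\{n-m,0\}})$. -/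
set_option maxHeartbeats 1000000
set_option synthInstance.maxHeartbeats 400000

/-- The completed local ring `A = k⟦s⟧[ε]/(ε²)` of a ribbon at a closed point. -/
abbrev RibbonLocalRing (k : Type) [Field k] : Type := DualNumber (PowerSeries k)

/-- The nilradical `𝒩 = (ε)` of `A`. -/
noncomputable abbrev ribbonNilradical (k : Type) [Field k] : Ideal (RibbonLocalRing k) :=
  Ideal.span {DualNumber.eps}

/-- The ideal `I_n = (ε, sⁿ)` of the divisor `np` inside the ribbon. -/
noncomputable abbrev ribbonIdeal (k : Type) [Field k] (n : ℕ) : Ideal (RibbonLocalRing k) :=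
  Ideal.span {DualNumber.eps, (TrivSqZeroExt.inl (PowerSeries.X ^ n) : RibbonLocalRing k)}

/-- The submodule `𝒩·I_n` of `A`. -/
noncomputable abbrev ribbonNI (k : Type) [Field k] (n : ℕ) : Ideal (RibbonLocalRing k) :=
  ribbonNilradical k * ribbonIdeal k n

/-!
Write `A = R[ε]` and let `t ∈ R` be a non-zero-divisor. The ideal `(ε)·(ε, tⁿ)` consists of the
elements `ε tⁿ c`, so it is free of rank one over `A/(ε) = R` on `ε tⁿ`, and an `A`-linear map
`f : (ε)(ε, tⁿ) → (ε)(ε, tᵐ)` is determined by the `c` with `f (ε tⁿ) = ε tᵐ c`; every `c` occurs.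
An `A`-linear `φ : (ε, tⁿ) → (ε, tᵐ)` sends `ε` to an element killed by `ε`, i.e. `φ ε = ε b`,
so its restriction sends `ε tⁿ` to `tⁿ φ ε = ε tⁿ b`; thus `tᵐ c = tⁿ b` and `t^{n-m} ∣ c`.
Conversely, if `c = t^{n-m} w` then multiplication by `t^{m-n} w` restricts to `f`. Hence
`f ↦ c mod t^{n-m}` is onto `R/(t^{n-m}) = A/(ε, t^{n-m})` with kernel the image of the
restriction map.
-/

open DualNumber TrivSqZeroExt

namespace DualNumber

variable {R : Type*} [CommRing R]

abbrev spanEpsInl (r : R) : Ideal R[ε] := Ideal.span {ε, inl r}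

abbrev nilSpanEpsInl (r : R) : Ideal R[ε] := Ideal.span {ε} * spanEpsInl r

theorem mul_inr (a : R[ε]) (c : R) : a * inr c = inr (a.fst * c) :=
  TrivSqZeroExt.ext (by simp) (by simp [mul_comm])

theorem eps_mul (x : R[ε]) : ε * x = inr x.fst :=
  TrivSqZeroExt.ext (by simp) (by simp)

theorem mem_spanEpsInl_iff {r : R} {x : R[ε]} : x ∈ spanEpsInl r ↔ r ∣ x.fst := by
  rw [Ideal.mem_span_pair]
  constructor
  · rintro ⟨a, b, rfl⟩
    exact ⟨b.fst, by simp [mul_comm]⟩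
  · rintro ⟨c, hc⟩
    exact ⟨inl x.snd, inl c, TrivSqZeroExt.ext (by simp [hc, mul_comm]) (by simp)⟩

theorem mem_nilSpanEpsInl_iff {r : R} {x : R[ε]} :
    x ∈ nilSpanEpsInl r ↔ x.fst = 0 ∧ r ∣ x.snd := by
  simp only [Ideal.mem_span_singleton_mul, mem_spanEpsInl_iff, eps_mul]
  constructor
  · rintro ⟨z, hz, rfl⟩
    exact ⟨rfl, hz⟩
  · rintro ⟨h0, hr⟩
    exact ⟨inl x.snd, hr, TrivSqZeroExt.ext (by simp [h0]) (by simp)⟩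

theorem quotient_mk_eq_of_fst_eq {r : R} {x y : R[ε]} (h : x.fst = y.fst) :
    (Submodule.Quotient.mk x : R[ε] ⧸ spanEpsInl r) = Submodule.Quotient.mk y := by
  rw [Submodule.Quotient.eq, mem_spanEpsInl_iff, fst_sub, h, sub_self]
  exact dvd_zero r

section NilCoeff

variable {r : R}

noncomputable def nilCoeff (y : nilSpanEpsInl r) : R :=
  (mem_nilSpanEpsInl_iff.1 y.2).2.choose

theorem coe_eq_inr_mul_nilCoeff (y : nilSpanEpsInl r) : (y : R[ε]) = inr (r * nilCoeff y) :=
  have hy := mem_nilSpanEpsInl_iff.1 y.2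
  TrivSqZeroExt.ext (by simp [hy.1]) (by rw [snd_inr]; exact hy.2.choose_spec)

theorem nilCoeff_eq_of_coe_eq (hr : IsLeftRegular r) {y : nilSpanEpsInl r} {c : R}
    (h : (y : R[ε]) = inr (r * c)) : nilCoeff y = c :=
  hr (inr_injective ((coe_eq_inr_mul_nilCoeff y).symm.trans h))

theorem nilCoeff_add (hr : IsLeftRegular r) (y z : nilSpanEpsInl r) :
    nilCoeff (y + z) = nilCoeff y + nilCoeff z :=
  nilCoeff_eq_of_coe_eq hr <| by
    rw [Submodule.coe_add, coe_eq_inr_mul_nilCoeff y, coe_eq_inr_mul_nilCoeff z, ← inr_add,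
      mul_add]

theorem nilCoeff_smul (hr : IsLeftRegular r) (a : R[ε]) (y : nilSpanEpsInl r) :
    nilCoeff (a • y) = a.fst * nilCoeff y :=
  nilCoeff_eq_of_coe_eq hr <| by
    rw [Submodule.coe_smul, smul_eq_mul, coe_eq_inr_mul_nilCoeff y, mul_inr, mul_left_comm]

variable (r) in
def nilGen : nilSpanEpsInl r :=
  ⟨inr r, mem_nilSpanEpsInl_iff.2 ⟨rfl, dvd_rfl⟩⟩

theorem coe_nilGen : (nilGen r : R[ε]) = inr r :=
  rfl

theorem nilCoeff_nilGen (hr : IsLeftRegular r) : nilCoeff (nilGen r) = 1 :=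
  nilCoeff_eq_of_coe_eq hr (by rw [mul_one]; rfl)

theorem inl_nilCoeff_smul_nilGen (y : nilSpanEpsInl r) :
    (inl (nilCoeff y) : R[ε]) • nilGen r = y := by
  ext1
  rw [Submodule.coe_smul, smul_eq_mul, coe_eq_inr_mul_nilCoeff y, mul_comm r]
  exact mul_inr (inl (nilCoeff y)) r

noncomputable def nilShift (hr : IsLeftRegular r) (s : R) :
    nilSpanEpsInl r →ₗ[R[ε]] nilSpanEpsInl s where
  toFun y := ⟨inr (s * nilCoeff y), mem_nilSpanEpsInl_iff.2 ⟨rfl, dvd_mul_right _ _⟩⟩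
  map_add' y z := by
    ext1
    simp only [nilCoeff_add hr, mul_add, inr_add, Submodule.coe_add]
  map_smul' a y := by
    ext1
    simp only [nilCoeff_smul hr, Submodule.coe_smul, smul_eq_mul, mul_inr, mul_left_comm,
      RingHom.id_apply]

theorem nilCoeff_nilShift (hr : IsLeftRegular r) {s : R} (hs : IsLeftRegular s)
    (y : nilSpanEpsInl r) :
    nilCoeff (nilShift hr s y) = nilCoeff y :=
  nilCoeff_eq_of_coe_eq hs rfl

end NilCoeff

theorem fst_apply_eps_eq_zero {I J : Ideal R[ε]} (φ : I →ₗ[R[ε]] J) (hε : ε ∈ I) :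
    (φ ⟨ε, hε⟩ : R[ε]).fst = 0 := by
  have hεε : (ε : R[ε]) • (⟨ε, hε⟩ : I) = 0 := Subtype.ext eps_mul_eps
  have h : ε * (φ ⟨ε, hε⟩ : R[ε]) = 0 := by
    rw [← smul_eq_mul, ← Submodule.coe_smul, ← map_smul, hεε, map_zero, Submodule.coe_zero]
  rw [eps_mul, ← inr_zero] at h
  exact inr_injective h

theorem eps_mem_spanEpsInl (r : R) : ε ∈ spanEpsInl r :=
  Ideal.subset_span (Set.mem_insert _ _)

theorem coe_apply_inr {r : R} {J : Ideal R[ε]} (φ : spanEpsInl r →ₗ[R[ε]] J)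
    (hr : inr r ∈ spanEpsInl r) :
    (φ ⟨inr r, hr⟩ : R[ε]) = inr (r * (φ ⟨ε, eps_mem_spanEpsInl r⟩ : R[ε]).snd) := by
  have hsmul : (⟨inr r, hr⟩ : spanEpsInl r) = (inl r : R[ε]) • ⟨ε, eps_mem_spanEpsInl r⟩ :=
    Subtype.ext (TrivSqZeroExt.ext (by simp) (by simp))
  have hinr : (φ ⟨ε, eps_mem_spanEpsInl r⟩ : R[ε]) =
      inr (φ ⟨ε, eps_mem_spanEpsInl r⟩ : R[ε]).snd :=
    TrivSqZeroExt.ext (fst_apply_eps_eq_zero φ _) rfl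
  rw [hsmul, map_smul, Submodule.coe_smul, smul_eq_mul, hinr, mul_inr, fst_inl, snd_inr]

section CokernelMap

variable {r s : R}

noncomputable def nilHomCoeffMod (hs : IsLeftRegular s) (r' : R) :
    (nilSpanEpsInl r →ₗ[R[ε]] nilSpanEpsInl s) →ₗ[R[ε]] R[ε] ⧸ spanEpsInl r' where
  toFun f := Submodule.Quotient.mk (inl (nilCoeff (f (nilGen r))))
  map_add' f g := by
    rw [LinearMap.add_apply, nilCoeff_add hs, inl_add, Submodule.Quotient.mk_add]
  map_smul' a f := by
    rw [LinearMap.smul_apply, nilCoeff_smul hs, RingHom.id_apply, ← Submodule.Quotient.mk_smul]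
    exact quotient_mk_eq_of_fst_eq (by simp)

theorem nilHomCoeffMod_surjective (hr : IsLeftRegular r) (hs : IsLeftRegular s) (r' : R) :
    Function.Surjective (nilHomCoeffMod (r := r) hs r') := by
  rintro ⟨x⟩
  refine ⟨x • nilShift hr s, ?_⟩
  rw [map_smul]
  show x • Submodule.Quotient.mk (inl (nilCoeff (nilShift hr s (nilGen r)))) = _
  rw [nilCoeff_nilShift hr hs, nilCoeff_nilGen hr, inl_one, ← Submodule.Quotient.mk_smul,
    smul_eq_mul, mul_one]
  rfl

theorem nilHomCoeffMod_eq_zero_iff (hs : IsLeftRegular s) (r' : R)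
    (f : nilSpanEpsInl r →ₗ[R[ε]] nilSpanEpsInl s) :
    nilHomCoeffMod hs r' f = 0 ↔ r' ∣ nilCoeff (f (nilGen r)) := by
  rw [nilHomCoeffMod, LinearMap.coe_mk, AddHom.coe_mk, Submodule.Quotient.mk_eq_zero,
    mem_spanEpsInl_iff, fst_inl]

end CokernelMap

theorem pow_sub_dvd_of_pow_mul_eq_pow_mul {t b c : R} (ht : IsLeftRegular t) {n m : ℕ}
    (h : t ^ m * c = t ^ n * b) : t ^ (n - m) ∣ c := by
  rcases le_total n m with hnm | hmn
  · rw [Nat.sub_eq_zero_of_le hnm, pow_zero]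
    exact one_dvd c
  · refine ⟨b, ht.pow m ?_⟩
    simp only [← mul_assoc, ← pow_add, Nat.add_sub_cancel' hmn, h]

section Restriction

variable {t : R} {n m : ℕ}

theorem pow_sub_dvd_nilCoeff_of_restrict (ht : IsLeftRegular t)
    {f : nilSpanEpsInl (t ^ n) →ₗ[R[ε]] nilSpanEpsInl (t ^ m)}
    {φ : spanEpsInl (t ^ n) →ₗ[R[ε]] spanEpsInl (t ^ m)}
    (hφ : ∀ y : nilSpanEpsInl (t ^ n), (φ ⟨y, Ideal.mul_le_right y.2⟩ : R[ε]) = f y) :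
    t ^ (n - m) ∣ nilCoeff (f (nilGen (t ^ n))) := by
  refine pow_sub_dvd_of_pow_mul_eq_pow_mul ht (b := (φ ⟨ε, eps_mem_spanEpsInl _⟩ : R[ε]).snd)
    (inr_injective (R := R) ?_)
  rw [← coe_eq_inr_mul_nilCoeff, ← hφ, ← coe_apply_inr]
  rfl

theorem exists_restrict_eq_of_pow_sub_dvd
    {f : nilSpanEpsInl (t ^ n) →ₗ[R[ε]] nilSpanEpsInl (t ^ m)}
    (h : t ^ (n - m) ∣ nilCoeff (f (nilGen (t ^ n)))) :
    ∃ φ : spanEpsInl (t ^ n) →ₗ[R[ε]] spanEpsInl (t ^ m),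
      ∀ y : nilSpanEpsInl (t ^ n), (φ ⟨y, Ideal.mul_le_right y.2⟩ : R[ε]) = f y := by
  obtain ⟨w, hw⟩ := h
  -- both sides are `t ^ max n m`, with truncated subtraction
  have hpow : t ^ (m - n) * t ^ n = t ^ m * t ^ (n - m) := by
    rw [← pow_add, ← pow_add]
    congr 1
    omega
  have hmaps : ∀ x ∈ spanEpsInl (t ^ n), inl (t ^ (m - n) * w) * x ∈ spanEpsInl (t ^ m) := by
    intro x hx
    obtain ⟨c, hc⟩ := mem_spanEpsInl_iff.1 hx
    exact mem_spanEpsInl_iff.2 ⟨t ^ (n - m) * w * c, by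
      rw [fst_mul, fst_inl, hc]
      linear_combination (w * c) * hpow⟩
  refine ⟨(LinearMap.mulLeft R[ε] (inl (t ^ (m - n) * w))).restrict fun x hx => hmaps x hx,
    fun y => ?_⟩
  show (inl (t ^ (m - n) * w) : R[ε]) * y = f y
  rw [← inl_nilCoeff_smul_nilGen y, map_smul, Submodule.coe_smul, Submodule.coe_smul,
    smul_eq_mul, smul_eq_mul, coe_nilGen, coe_eq_inr_mul_nilCoeff (f _), hw]
  simp only [mul_inr, fst_inl]
  congr 1
  linear_combination (w * nilCoeff y) * hpow

theorem pow_sub_dvd_nilCoeff_iff_exists_restrict (ht : IsLeftRegular t)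
    (f : nilSpanEpsInl (t ^ n) →ₗ[R[ε]] nilSpanEpsInl (t ^ m)) :
    t ^ (n - m) ∣ nilCoeff (f (nilGen (t ^ n))) ↔
      ∃ φ : spanEpsInl (t ^ n) →ₗ[R[ε]] spanEpsInl (t ^ m),
        ∀ y : nilSpanEpsInl (t ^ n), (φ ⟨y, Ideal.mul_le_right y.2⟩ : R[ε]) = f y :=
  ⟨exists_restrict_eq_of_pow_sub_dvd, fun ⟨_, hφ⟩ => pow_sub_dvd_nilCoeff_of_restrict ht hφ⟩

end Restriction

end DualNumber

/-- The cokernel of the restriction map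
`Hom(I_n, I_m) → Hom(𝒩·I_n, 𝒩·I_m)`, `φ ↦ φ|_{𝒩 I_n}`, is isomorphic as a module to
`k⟦s⟧/(s^{max(n-m,0)}) = A/(ε, s^{n-m})` (with truncated subtraction `n - m` in `ℕ`);
this is expressed by the existence of a surjective `A`-linear map from
`Hom(𝒩·I_n, 𝒩·I_m)` onto `A/(ε, s^{n-m})` whose kernel is exactly the image of the
restriction map. -/
theorem cokernel_restriction_iso (k : Type) [Field k] (n m : ℕ)
    (res : ((ribbonIdeal k n) →ₗ[RibbonLocalRing k] (ribbonIdeal k m)) →ₗ[RibbonLocalRing k]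
      ((ribbonNI k n) →ₗ[RibbonLocalRing k] (ribbonNI k m)))
    (hres : ∀ (φ : (ribbonIdeal k n) →ₗ[RibbonLocalRing k] (ribbonIdeal k m))
      (x : ribbonNI k n),
      ((res φ x : RibbonLocalRing k)) =
        ((φ ⟨(x : RibbonLocalRing k), Ideal.mul_le_right x.2⟩ : ribbonIdeal k m) :
          RibbonLocalRing k)) :
    ∃ π : ((ribbonNI k n) →ₗ[RibbonLocalRing k] (ribbonNI k m)) →ₗ[RibbonLocalRing k]
        (RibbonLocalRing k ⧸ ribbonIdeal k (n - m)),
      Function.Surjective π ∧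
        ∀ f : (ribbonNI k n) →ₗ[RibbonLocalRing k] (ribbonNI k m),
          π f = 0 ↔ ∃ φ, res φ = f := by
  have hX : IsLeftRegular (PowerSeries.X : PowerSeries k) :=
    (IsRegular.of_ne_zero PowerSeries.X_ne_zero).left
  refine ⟨nilHomCoeffMod (hX.pow m) _, nilHomCoeffMod_surjective (hX.pow n) (hX.pow m) _,
    fun f => ?_⟩
  have hres_eq : ∀ φ, res φ = f ↔
      ∀ y : ribbonNI k n, (φ ⟨y, Ideal.mul_le_right y.2⟩ : RibbonLocalRing k) = f y := by
    simp only [LinearMap.ext_iff, Subtype.ext_iff, hres, implies_true]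
  simp only [nilHomCoeffMod_eq_zero_iff, hres_eq]
  exact pow_sub_dvd_nilCoeff_iff_exists_restrict hX f
end

section
/- Let $\delta<0$ and let $(r_0,r_1;d_0,d_1)$ be an admissible sequence (i.e. $r_0\ge r_1\ge0$, $r_1=0\Rightarrow d_1=0$, $r_0=r_1\Rightarrow d_0\ge d_1+r_1\delta$) satisfying the semistability condition: either $r_1=0$, or $r_0>r_1>0$ with $\frac{d_0-(r_0+r_1)\delta}{r_0}\le\frac{d_1}{r_1}\le\frac{d_0}{r_0}$, or $r_0=r_1$ with $d_0\le d_1+2r_0\delta$. Then $r_1=0$. -/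
/-- If `δ < 0`, an admissible sequence satisfying the numerical semistability
conditions must have `r₁ = 0`. -/
theorem semistable_negative_delta
    (r0 r1 d0 d1 δ : ℤ) (hδ : δ < 0)
    (h01 : r0 ≥ r1) (h1 : r1 ≥ 0)
    (hadm1 : r1 = 0 → d1 = 0)
    (hadm2 : r0 = r1 → d0 ≥ d1 + r1 * δ)
    (hss : r1 = 0 ∨
      (r0 > r1 ∧ r1 > 0 ∧
        ((d0 : ℚ) - ((r0 : ℚ) + r1) * δ) / r0 ≤ (d1 : ℚ) / r1 ∧
        (d1 : ℚ) / r1 ≤ (d0 : ℚ) / r0) ∨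
      (r0 = r1 ∧ d0 ≤ d1 + 2 * r0 * δ)) :
    r1 = 0 := by
  rcases hss with h | ⟨hr, hr1, ha, hb⟩ | ⟨he, hd⟩
  · exact h
  · exfalso
    have hr0Q : (0:ℚ) < (r0:ℚ) := by exact_mod_cast lt_trans (by exact_mod_cast hr1) hr
    have hr1Q : (0:ℚ) < (r1:ℚ) := by exact_mod_cast hr1
    have h2 : (d1:ℚ) * r0 ≤ (d0:ℚ) * r1 := by
      rw [div_le_div_iff₀ hr1Q hr0Q] at hb; exact hb
    have h3 : ((d0 : ℚ) - ((r0 : ℚ) + r1) * δ) * r1 ≤ (d1:ℚ) * r0 := by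
      rw [div_le_div_iff₀ hr0Q hr1Q] at ha; exact ha
    have hδQ : (δ:ℚ) < 0 := by exact_mod_cast hδ
    nlinarith [mul_pos (add_pos hr0Q hr1Q) hr1Q]
  · rcases lt_or_eq_of_le h1 with h | h
    · exfalso; have := hadm2 he; nlinarith
    · exact h.symm
end
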